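/- arXiv:2509.26373 — 2 statements merged into one kernel-verified Lean document; each statement's English description precedes it below -/
import Mathlib

section
/- There is no pair of unitaries U₁, U₂ on a finite-dimensional complex Hilbert space of dimension d ≥ 1 such that |⟨ψ|U₁|ψ⟩|² + |⟨ψ|U₂|ψ⟩|² = 1 for every unit vector ψ. -/
open Matrix

namespace NPCAux

variable {d : ℕ}

/-- Conjugation of a sesquilinear matrix element. -/
private lemma conj_dot (U : Matrix (Fin d) (Fin d) ℂ) (x y : Fin d → ℂ) :
    (starRingEnd ℂ) (star x ⬝ᵥ (U *ᵥ y)) = star y ⬝ᵥ (Uᴴ *ᵥ x) := by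
  simp only [dotProduct, mulVec, Pi.star_apply, RCLike.star_def, conjTranspose_apply,
    Finset.mul_sum, map_sum, _root_.map_mul, Complex.conj_conj]
  rw [Finset.sum_comm]
  refine Finset.sum_congr rfl fun i _ => Finset.sum_congr rfl fun j _ => ?_
  ring

private lemma dot_conj_comm (x y : Fin d → ℂ) :
    (starRingEnd ℂ) (star x ⬝ᵥ y) = star y ⬝ᵥ x := by
  simp only [dotProduct, Pi.star_apply, RCLike.star_def, map_sum, _root_.map_mul,
    Complex.conj_conj]
  exact Finset.sum_congr rfl fun i _ => mul_comm _ _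

private lemma dot_self_real (x : Fin d → ℂ) :
    star x ⬝ᵥ x = ((∑ i, Complex.normSq (x i) : ℝ) : ℂ) := by
  push_cast
  refine Finset.sum_congr rfl fun i _ => ?_
  rw [Pi.star_apply, RCLike.star_def, mul_comm, Complex.mul_conj]

private lemma norm_eq_one_of (ψ : EuclideanSpace ℂ (Fin d))
    (h : star (ψ : Fin d → ℂ) ⬝ᵥ (ψ : Fin d → ℂ) = 1) : ‖ψ‖ = 1 := by
  rw [dot_self_real] at h
  have h' : (∑ i, Complex.normSq (ψ i)) = 1 := by exact_mod_cast h
  rw [EuclideanSpace.norm_eq]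
  simp only [Complex.sq_norm]
  rw [h', Real.sqrt_one]

private lemma complexified (U₁ U₂ : Matrix (Fin d) (Fin d) ℂ)
    (H : ∀ ψ : EuclideanSpace ℂ (Fin d), ‖ψ‖ = 1 →
      ‖star (ψ : Fin d → ℂ) ⬝ᵥ (U₁ *ᵥ ψ)‖ ^ 2 +
        ‖star (ψ : Fin d → ℂ) ⬝ᵥ (U₂ *ᵥ ψ)‖ ^ 2 = 1)
    (ψ : Fin d → ℂ) (hψ : star ψ ⬝ᵥ ψ = 1) :
    (star ψ ⬝ᵥ (U₁ *ᵥ ψ)) * ((starRingEnd ℂ) (star ψ ⬝ᵥ (U₁ *ᵥ ψ))) +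
      (star ψ ⬝ᵥ (U₂ *ᵥ ψ)) * ((starRingEnd ℂ) (star ψ ⬝ᵥ (U₂ *ᵥ ψ))) = 1 := by
  have hH := H (WithLp.toLp 2 ψ) (norm_eq_one_of (WithLp.toLp 2 ψ) hψ)
  rw [Complex.mul_conj, Complex.mul_conj]
  norm_cast
  simp only [Complex.normSq_eq_norm_sq]
  exact hH

private lemma expand0 (e v : Fin d → ℂ) (α β : ℂ) :
    star (α • e + β • v) ⬝ᵥ (α • e + β • v) =
      (starRingEnd ℂ) α * α * (star e ⬝ᵥ e) + (starRingEnd ℂ) α * β * (star e ⬝ᵥ v) +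
        α * (starRingEnd ℂ) β * (star v ⬝ᵥ e) + β * (starRingEnd ℂ) β * (star v ⬝ᵥ v) := by
  simp only [star_add, star_smul, RCLike.star_def, add_dotProduct, smul_dotProduct,
    dotProduct_add, dotProduct_smul, smul_eq_mul]
  ring

private lemma expand (U : Matrix (Fin d) (Fin d) ℂ) (e v : Fin d → ℂ) (α β : ℂ) :
    star (α • e + β • v) ⬝ᵥ (U *ᵥ (α • e + β • v)) =
      (starRingEnd ℂ) α * α * (star e ⬝ᵥ (U *ᵥ e)) +
        (starRingEnd ℂ) α * β * (star e ⬝ᵥ (U *ᵥ v)) +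
        α * (starRingEnd ℂ) β * (star v ⬝ᵥ (U *ᵥ e)) +
        β * (starRingEnd ℂ) β * (star v ⬝ᵥ (U *ᵥ v)) := by
  simp only [star_add, star_smul, RCLike.star_def, mulVec_add, mulVec_smul,
    add_dotProduct, smul_dotProduct, dotProduct_add, dotProduct_smul, smul_eq_mul]
  ring

private lemma key (U₁ U₂ : Matrix (Fin d) (Fin d) ℂ)
    (H : ∀ ψ : EuclideanSpace ℂ (Fin d), ‖ψ‖ = 1 →
      ‖star (ψ : Fin d → ℂ) ⬝ᵥ (U₁ *ᵥ ψ)‖ ^ 2 +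
        ‖star (ψ : Fin d → ℂ) ⬝ᵥ (U₂ *ᵥ ψ)‖ ^ 2 = 1)
    (e v : Fin d → ℂ) (hee : star e ⬝ᵥ e = 1) (hvv : star v ⬝ᵥ v = 1)
    (hev : star e ⬝ᵥ v = 0) (hve : star v ⬝ᵥ e = 0)
    (α β α' β' : ℂ) (hα : (starRingEnd ℂ) α = α') (hβ : (starRingEnd ℂ) β = β')
    (hab : α' * α + β' * β = 1) :
    (α' * α * (star e ⬝ᵥ (U₁ *ᵥ e)) + α' * β * (star e ⬝ᵥ (U₁ *ᵥ v)) +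
        α * β' * (star v ⬝ᵥ (U₁ *ᵥ e)) + β * β' * (star v ⬝ᵥ (U₁ *ᵥ v))) *
      (α' * α * (star e ⬝ᵥ (U₁ᴴ *ᵥ e)) + α' * β * (star e ⬝ᵥ (U₁ᴴ *ᵥ v)) +
        α * β' * (star v ⬝ᵥ (U₁ᴴ *ᵥ e)) + β * β' * (star v ⬝ᵥ (U₁ᴴ *ᵥ v))) +
    (α' * α * (star e ⬝ᵥ (U₂ *ᵥ e)) + α' * β * (star e ⬝ᵥ (U₂ *ᵥ v)) +
        α * β' * (star v ⬝ᵥ (U₂ *ᵥ e)) + β * β' * (star v ⬝ᵥ (U₂ *ᵥ v))) *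
      (α' * α * (star e ⬝ᵥ (U₂ᴴ *ᵥ e)) + α' * β * (star e ⬝ᵥ (U₂ᴴ *ᵥ v)) +
        α * β' * (star v ⬝ᵥ (U₂ᴴ *ᵥ e)) + β * β' * (star v ⬝ᵥ (U₂ᴴ *ᵥ v))) = 1 := by
  have hψ1 : star (α • e + β • v) ⬝ᵥ (α • e + β • v) = 1 := by
    rw [expand0 e v α β, hα, hβ, hee, hvv, hev, hve]
    linear_combination hab
  have hC := complexified U₁ U₂ H (α • e + β • v) hψ1
  rw [conj_dot U₁, conj_dot U₂] at hC
  rw [expand U₁ e v α β, expand U₁ᴴ e v α β, expand U₂ e v α β, expand U₂ᴴ e v α β] at hC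
  rw [hα, hβ] at hC
  linear_combination hC

private lemma pairBB (U₁ U₂ : Matrix (Fin d) (Fin d) ℂ)
    (H : ∀ ψ : EuclideanSpace ℂ (Fin d), ‖ψ‖ = 1 →
      ‖star (ψ : Fin d → ℂ) ⬝ᵥ (U₁ *ᵥ ψ)‖ ^ 2 +
        ‖star (ψ : Fin d → ℂ) ⬝ᵥ (U₂ *ᵥ ψ)‖ ^ 2 = 1)
    (e v : Fin d → ℂ) (hee : star e ⬝ᵥ e = 1) (hvv : star v ⬝ᵥ v = 1)
    (hev : star e ⬝ᵥ v = 0) (hve : star v ⬝ᵥ e = 0) :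
    (star e ⬝ᵥ (U₁ *ᵥ v)) * (star e ⬝ᵥ (U₁ᴴ *ᵥ v)) +
      (star e ⬝ᵥ (U₂ *ᵥ v)) * (star e ⬝ᵥ (U₂ᴴ *ᵥ v)) = 0 := by
  have h1 := key U₁ U₂ H e v hee hvv hev hve (3/5) (4/5) (3/5) (4/5)
    (by simp [Complex.conj_ofNat]) (by simp [Complex.conj_ofNat]) (by norm_num)
  have h2 := key U₁ U₂ H e v hee hvv hev hve (3/5) (4/5 * Complex.I) (3/5)
    (-(4/5 * Complex.I))
    (by simp [Complex.conj_ofNat]) (by simp [Complex.conj_ofNat])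
    (by linear_combination (-(16/25) : ℂ) * Complex.I_mul_I)
  have h3 := key U₁ U₂ H e v hee hvv hev hve (3/5) (-(4/5)) (3/5) (-(4/5))
    (by simp [Complex.conj_ofNat]) (by simp [Complex.conj_ofNat]) (by norm_num)
  have h4 := key U₁ U₂ H e v hee hvv hev hve (3/5) (-(4/5 * Complex.I)) (3/5)
    (4/5 * Complex.I)
    (by simp [Complex.conj_ofNat]) (by simp [Complex.conj_ofNat])
    (by linear_combination (-(16/25) : ℂ) * Complex.I_mul_I)
  have h5 := key U₁ U₂ H e v hee hvv hev hve (3/5) (12/25 + 16/25 * Complex.I) (3/5)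
    (12/25 + -(16/25 * Complex.I))
    (by simp [Complex.conj_ofNat]) (by simp [Complex.conj_ofNat])
    (by linear_combination (-(256/625) : ℂ) * Complex.I_mul_I)
  linear_combination (norm := ring1)
      ((625/1152) + (625/576)*Complex.I : ℂ) * h1 +
      ((-625/1152) + (625/384)*Complex.I : ℂ) * h2 +
      ((625/1152) + (-625/2304)*Complex.I : ℂ) * h3 +
      ((-625/1152) + (-625/3456)*Complex.I : ℂ) * h4 +
      ((-15625/6912)*Complex.I : ℂ) * h5 +
      (((3/4) : ℂ) * (star e ⬝ᵥ (U₁ *ᵥ v)) * (star e ⬝ᵥ (U₁ᴴ *ᵥ v)) + ((3/4) : ℂ) * (star e ⬝ᵥ (U₂ *ᵥ v)) * (star e ⬝ᵥ (U₂ᴴ *ᵥ v)) + ((-1/4) : ℂ) * (star e ⬝ᵥ (U₁ *ᵥ e)) * (star v ⬝ᵥ (U₁ᴴ *ᵥ v)) + ((-1/4) : ℂ) * (star e ⬝ᵥ (U₁ *ᵥ v)) * (star v ⬝ᵥ (U₁ᴴ *ᵥ e)) + ((-4/15)*Complex.I + (1/5)*Complex.I*Complex.I : ℂ) * (star e ⬝ᵥ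 (U₁ *ᵥ v)) * (star v ⬝ᵥ (U₁ᴴ *ᵥ v)) + ((-1/4) : ℂ) * (star e ⬝ᵥ (U₁ᴴ *ᵥ v)) * (star v ⬝ᵥ (U₁ *ᵥ e)) + ((-1/4) : ℂ) * (star v ⬝ᵥ (U₁ *ᵥ e)) * (star v ⬝ᵥ (U₁ᴴ *ᵥ e)) + ((-4/15)*Complex.I + (-1/5)*Complex.I*Complex.I : ℂ) * (star v ⬝ᵥ (U₁ *ᵥ e)) * (star v ⬝ᵥ (U₁ᴴ *ᵥ v)) + ((-1/4) : ℂ) * (star e ⬝ᵥ (U₁ᴴ *ᵥ e)) * (star v ⬝ᵥ (U₁ *ᵥ v)) + ((-4/15)*Complex.I + (1/5)*Complex.I*Complex.I : ℂ) * (star e ⬝ᵥ (U₁ᴴ *ᵥ v)) * (star v ⬝ᵥ (U₁ *ᵥ v)) + ((-4/15)*Complex.I + (-1/5)*Complex.I*Complex.I : ℂ) * (star v ⬝ᵥ (U₁ᴴ *ᵥ e)) * (star v ⬝ᵥ (U₁ *ᵥ v)) + ((-4/9) + (-16/75)*Complex.I + (4/9)*Complex.I*Complex.I + (-16/75)*Complex.I*Complex.I*Complex.I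 : ℂ) * (star v ⬝ᵥ (U₁ *ᵥ v)) * (star v ⬝ᵥ (U₁ᴴ *ᵥ v)) + ((-1/4) : ℂ) * (star e ⬝ᵥ (U₂ *ᵥ e)) * (star v ⬝ᵥ (U₂ᴴ *ᵥ v)) + ((-1/4) : ℂ) * (star e ⬝ᵥ (U₂ *ᵥ v)) * (star v ⬝ᵥ (U₂ᴴ *ᵥ e)) + ((-4/15)*Complex.I + (1/5)*Complex.I*Complex.I : ℂ) * (star e ⬝ᵥ (U₂ *ᵥ v)) * (star v ⬝ᵥ (U₂ᴴ *ᵥ v)) + ((-1/4) : ℂ) * (star e ⬝ᵥ (U₂ᴴ *ᵥ v)) * (star v ⬝ᵥ (U₂ *ᵥ e)) + ((-1/4) : ℂ) * (star v ⬝ᵥ (U₂ *ᵥ e)) * (star v ⬝ᵥ (U₂ᴴ *ᵥ e)) + ((-4/15)*Complex.I + (-1/5)*Complex.I*Complex.I : ℂ) * (star v ⬝ᵥ (U₂ *ᵥ e)) * (star v ⬝ᵥ (U₂ᴴ *ᵥ v)) + ((-1/4) : ℂ) * (star e ⬝ᵥ (U₂ᴴ *ᵥ e)) * (star v ⬝ᵥ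 (U₂ *ᵥ v)) + ((-4/15)*Complex.I + (1/5)*Complex.I*Complex.I : ℂ) * (star e ⬝ᵥ (U₂ᴴ *ᵥ v)) * (star v ⬝ᵥ (U₂ *ᵥ v)) + ((-4/15)*Complex.I + (-1/5)*Complex.I*Complex.I : ℂ) * (star v ⬝ᵥ (U₂ᴴ *ᵥ e)) * (star v ⬝ᵥ (U₂ *ᵥ v)) + ((-4/9) + (-16/75)*Complex.I + (4/9)*Complex.I*Complex.I + (-16/75)*Complex.I*Complex.I*Complex.I : ℂ) * (star v ⬝ᵥ (U₂ *ᵥ v)) * (star v ⬝ᵥ (U₂ᴴ *ᵥ v))) * Complex.I_mul_I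

private lemma exists_unit_smul (x : Fin d → ℂ) (hx : x ≠ 0) :
    ∃ c : ℂ, c ≠ 0 ∧ star (c • x) ⬝ᵥ (c • x) = 1 := by
  obtain ⟨i, hi⟩ := Function.ne_iff.mp hx
  have hi' : x i ≠ 0 := by simpa using hi
  have hS : 0 < ∑ j, Complex.normSq (x j) :=
    Finset.sum_pos' (fun j _ => Complex.normSq_nonneg _)
      ⟨i, Finset.mem_univ i, Complex.normSq_pos.mpr hi'⟩
  set S : ℝ := ∑ j, Complex.normSq (x j) with hSdef
  have hsq : Real.sqrt S ≠ 0 := by positivity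
  refine ⟨(((Real.sqrt S)⁻¹ : ℝ) : ℂ), by exact_mod_cast inv_ne_zero hsq, ?_⟩
  rw [star_smul, smul_dotProduct, dotProduct_smul, dot_self_real, ← hSdef]
  rw [RCLike.star_def, Complex.conj_ofReal, smul_eq_mul, smul_eq_mul]
  have : ((Real.sqrt S)⁻¹ * ((Real.sqrt S)⁻¹ * S) : ℝ) = 1 := by
    rw [← mul_assoc, ← mul_inv]
    rw [Real.mul_self_sqrt hS.le]
    field_simp
  exact_mod_cast this

private lemma final_contra (M N : Matrix (Fin d) (Fin d) ℂ) (hMN : M * N = 1)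
    (e : Fin d → ℂ) (hee : star e ⬝ᵥ e = 1)
    (h0 : star e ⬝ᵥ (M *ᵥ e) = 0)
    (hW : ∀ v : Fin d → ℂ, star e ⬝ᵥ v = 0 → star e ⬝ᵥ (M *ᵥ v) = 0) : False := by
  have hall : ∀ x : Fin d → ℂ, star e ⬝ᵥ (M *ᵥ x) = 0 := by
    intro x
    have hdec : star e ⬝ᵥ (x - (star e ⬝ᵥ x) • e) = 0 := by
      rw [dotProduct_sub, dotProduct_smul, hee, smul_eq_mul, mul_one, sub_self]
    have h1 := hW _ hdec
    have h2 : star e ⬝ᵥ (M *ᵥ x) =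
        star e ⬝ᵥ (M *ᵥ (x - (star e ⬝ᵥ x) • e)) +
          (star e ⬝ᵥ x) * (star e ⬝ᵥ (M *ᵥ e)) := by
      rw [mulVec_sub, mulVec_smul, dotProduct_sub, dotProduct_smul, smul_eq_mul]
      ring
    rw [h2, h1, h0]
    ring
  have hcon := hall (N *ᵥ e)
  rw [Matrix.mulVec_mulVec, hMN, Matrix.one_mulVec, hee] at hcon
  exact one_ne_zero hcon

end NPCAux

open NPCAux in
/-- No perfect complement: there is no pair of unitaries `U₁, U₂` on `ℂ^d`
(`d ≥ 1`) such that `|⟨ψ|U₁|ψ⟩|² + |⟨ψ|U₂|ψ⟩|² = 1` for every unit vector `ψ`. -/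
theorem no_perfect_complement (d : ℕ) (hd : 1 ≤ d) :
    ¬ ∃ U₁ U₂ : Matrix (Fin d) (Fin d) ℂ,
      U₁ ∈ Matrix.unitaryGroup (Fin d) ℂ ∧ U₂ ∈ Matrix.unitaryGroup (Fin d) ℂ ∧
      ∀ ψ : EuclideanSpace ℂ (Fin d), ‖ψ‖ = 1 →
        ‖star (ψ : Fin d → ℂ) ⬝ᵥ (U₁ *ᵥ ψ)‖ ^ 2 +
          ‖star (ψ : Fin d → ℂ) ⬝ᵥ (U₂ *ᵥ ψ)‖ ^ 2 = 1 := by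
  rintro ⟨U₁, U₂, h1, h2, H⟩
  have hU1a : U₁ᴴ * U₁ = 1 := by
    have h := (Unitary.mem_iff.mp h1).1
    rwa [Matrix.star_eq_conjTranspose] at h
  have hU2a : U₂ᴴ * U₂ = 1 := by
    have h := (Unitary.mem_iff.mp h2).1
    rwa [Matrix.star_eq_conjTranspose] at h
  have hU2b : U₂ * U₂ᴴ = 1 := by
    have h := (Unitary.mem_iff.mp h2).2
    rwa [Matrix.star_eq_conjTranspose] at h
  haveI : Inhabited (Fin d) := ⟨⟨0, hd⟩⟩
  haveI : Nontrivial (Fin d → ℂ) := Pi.nontrivial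
  -- eigenvector of U₁
  obtain ⟨μ, hμ⟩ := Module.End.exists_eigenvalue (Matrix.mulVecLin U₁)
  obtain ⟨e0, he0⟩ := hμ.exists_hasEigenvector
  have he0v : U₁ *ᵥ e0 = μ • e0 := by
    have h := he0.apply_eq_smul
    rwa [Matrix.mulVecLin_apply] at h
  obtain ⟨c, hc0, hcc⟩ := exists_unit_smul e0 he0.right
  set e : Fin d → ℂ := c • e0 with hedef
  have hee : star e ⬝ᵥ e = 1 := hcc
  have heig : U₁ *ᵥ e = μ • e := by
    rw [hedef, mulVec_smul, he0v, smul_comm]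
  -- |μ|² = 1
  have hq : star (U₁ *ᵥ e) ⬝ᵥ (U₁ *ᵥ e) = 1 := by
    rw [Matrix.star_mulVec, Matrix.dotProduct_mulVec, Matrix.vecMul_vecMul, hU1a,
      Matrix.vecMul_one, hee]
  have hmu : μ * (starRingEnd ℂ) μ = 1 := by
    rw [heig] at hq
    rw [star_smul, smul_dotProduct, dotProduct_smul, RCLike.star_def, smul_eq_mul,
      smul_eq_mul, hee] at hq
    linear_combination hq
  -- diagonal matrix element of U₂ at e vanishes
  have hd1 : star e ⬝ᵥ (U₁ *ᵥ e) = μ := by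
    rw [heig, dotProduct_smul, smul_eq_mul, hee, mul_one]
  have hCe := complexified U₁ U₂ H e hee
  rw [hd1] at hCe
  have hE2 : star e ⬝ᵥ (U₂ *ᵥ e) = 0 := by
    have hz : (star e ⬝ᵥ (U₂ *ᵥ e)) * (starRingEnd ℂ) (star e ⬝ᵥ (U₂ *ᵥ e)) = 0 := by
      linear_combination hCe - hmu
    have h3 : ((Complex.normSq (star e ⬝ᵥ (U₂ *ᵥ e)) : ℝ) : ℂ) = 0 := by
      rw [← Complex.mul_conj]; exact hz
    exact Complex.normSq_eq_zero.mp (by exact_mod_cast h3)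
  have hE2' : star e ⬝ᵥ (U₂ᴴ *ᵥ e) = 0 := by
    rw [← conj_dot U₂ e e, hE2, map_zero]
  -- for every v orthogonal to e, the product of the two off-diagonal elements vanishes
  have hFG : ∀ v : Fin d → ℂ, star e ⬝ᵥ v = 0 →
      (star e ⬝ᵥ (U₂ *ᵥ v)) * (star e ⬝ᵥ (U₂ᴴ *ᵥ v)) = 0 := by
    intro v hv
    by_cases hv0 : v = 0
    · rw [hv0, mulVec_zero, dotProduct_zero, zero_mul]
    · obtain ⟨t, ht0, htt⟩ := exists_unit_smul v hv0
      set w : Fin d → ℂ := t • v with hwdef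
      have hew : star e ⬝ᵥ w = 0 := by
        rw [hwdef, dotProduct_smul, hv, smul_zero]
      have hwe : star w ⬝ᵥ e = 0 := by
        have h := dot_conj_comm e w
        rw [hew, map_zero] at h
        exact h.symm
      have hpair := pairBB U₁ U₂ H e w hee htt hew hwe
      have hB1p : star e ⬝ᵥ (U₁ᴴ *ᵥ w) = 0 := by
        rw [← conj_dot U₁ w e, heig, dotProduct_smul, hwe, smul_zero, map_zero]
      rw [hB1p, mul_zero, zero_add] at hpair
      have hscF : star e ⬝ᵥ (U₂ *ᵥ w) = t * (star e ⬝ᵥ (U₂ *ᵥ v)) := by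
        rw [hwdef, mulVec_smul, dotProduct_smul, smul_eq_mul]
      have hscG : star e ⬝ᵥ (U₂ᴴ *ᵥ w) = t * (star e ⬝ᵥ (U₂ᴴ *ᵥ v)) := by
        rw [hwdef, mulVec_smul, dotProduct_smul, smul_eq_mul]
      rw [hscF, hscG] at hpair
      rcases mul_eq_zero.mp hpair with h | h
      · rcases mul_eq_zero.mp h with h' | h'
        · exact absurd h' ht0
        · rw [h', zero_mul]
      · rcases mul_eq_zero.mp h with h' | h'
        · exact absurd h' ht0
        · rw [h', mul_zero]
  -- dichotomy: one of the two linear forms vanishes on the orthocomplement of e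
  by_cases hF : ∀ v : Fin d → ℂ, star e ⬝ᵥ v = 0 → star e ⬝ᵥ (U₂ *ᵥ v) = 0
  · exact final_contra U₂ U₂ᴴ hU2b e hee hE2 hF
  · push_neg at hF
    obtain ⟨w, hw, hFw⟩ := hF
    refine final_contra U₂ᴴ U₂ hU2a e hee hE2' (fun v hv => ?_)
    have hGw : star e ⬝ᵥ (U₂ᴴ *ᵥ w) = 0 := by
      rcases mul_eq_zero.mp (hFG w hw) with h | h
      · exact absurd h hFw
      · exact h
    rcases mul_eq_zero.mp (hFG v hv) with h | h
    · have hvw : star e ⬝ᵥ (v + w) = 0 := by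
        rw [dotProduct_add, hv, hw, add_zero]
      have h2 := hFG (v + w) hvw
      have hFvw : star e ⬝ᵥ (U₂ *ᵥ (v + w)) = star e ⬝ᵥ (U₂ *ᵥ w) := by
        rw [mulVec_add, dotProduct_add, h, zero_add]
      rw [hFvw] at h2
      rcases mul_eq_zero.mp h2 with h3 | h3
      · exact absurd h3 hFw
      · rw [mulVec_add, dotProduct_add, hGw] at h3
        linear_combination h3
    · exact h
end

section
/- Impossibility of perfect anti-correlation for self-fidelities: for any unitaries U₁, U₂ on ℂ^d, there do not exist real constants a < 0 and b such that |⟨ψ|U₂|ψ⟩|² = a·|⟨ψ|U₁|ψ⟩|² + b for every unit vector ψ, unless both self-fidelity functions are constant (i.e., at least one of the functions is constant on the unit sphere). -/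
set_option maxHeartbeats 1000000

open Matrix

section AuxNoPerfectAnticorrelation

variable {d : ℕ}

private lemma conj_dot' (x y : Fin d → ℂ) :
    (starRingEnd ℂ) (star x ⬝ᵥ y) = star y ⬝ᵥ x := by
  simp [dotProduct, map_sum, mul_comm]

private lemma conj_dotU (U : Matrix (Fin d) (Fin d) ℂ) (x y : Fin d → ℂ) :
    (starRingEnd ℂ) (star x ⬝ᵥ (U *ᵥ y)) = star y ⬝ᵥ (Uᴴ *ᵥ x) := by
  have h : (starRingEnd ℂ) (star x ⬝ᵥ (U *ᵥ y)) = star (star x ⬝ᵥ (U *ᵥ y)) := rfl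
  rw [h, star_dotProduct, star_star, star_mulVec, ← dotProduct_mulVec]

private lemma unit_dot (U : Matrix (Fin d) (Fin d) ℂ) (hU : Uᴴ * U = 1) (x y : Fin d → ℂ) :
    star (U *ᵥ x) ⬝ᵥ (U *ᵥ y) = star x ⬝ᵥ y := by
  rw [star_mulVec, dotProduct_mulVec, vecMul_vecMul, hU, vecMul_one]

private lemma inner_eq_dot (x y : EuclideanSpace ℂ (Fin d)) :
    (inner ℂ x y : ℂ) = star (x : Fin d → ℂ) ⬝ᵥ (y : Fin d → ℂ) := by
  simp [PiLp.inner_apply, dotProduct, RCLike.inner_apply, mul_comm]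

private lemma polar9 (j A B p2 q2 r2 s2 p3 q3 r3 s3 p1 q1 r1 s1 p4 q4 r4 s4 pn qn rn sn : ℂ)
    (hj : j * j = -1)
    (h1 : (p2 + (1)*q2 + (1)*r2 + (1)*(1)*s2) * (p3 + (1)*q3 + (1)*r3 + (1)*(1)*s3) =
      A * ((p1 + (1)*q1 + (1)*r1 + (1)*(1)*s1) * (p4 + (1)*q4 + (1)*r4 + (1)*(1)*s4)) + B * (pn + (1)*qn + (1)*rn + (1)*(1)*sn)^2)
    (h2 : (p2 + (-1)*q2 + (-1)*r2 + (-1)*(-1)*s2) * (p3 + (-1)*q3 + (-1)*r3 + (-1)*(-1)*s3) =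
      A * ((p1 + (-1)*q1 + (-1)*r1 + (-1)*(-1)*s1) * (p4 + (-1)*q4 + (-1)*r4 + (-1)*(-1)*s4)) + B * (pn + (-1)*qn + (-1)*rn + (-1)*(-1)*sn)^2)
    (h3 : (p2 + (j)*q2 + (-j)*r2 + (j)*(-j)*s2) * (p3 + (j)*q3 + (-j)*r3 + (j)*(-j)*s3) =
      A * ((p1 + (j)*q1 + (-j)*r1 + (j)*(-j)*s1) * (p4 + (j)*q4 + (-j)*r4 + (j)*(-j)*s4)) + B * (pn + (j)*qn + (-j)*rn + (j)*(-j)*sn)^2)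
    (h4 : (p2 + (-j)*q2 + (j)*r2 + (-j)*(j)*s2) * (p3 + (-j)*q3 + (j)*r3 + (-j)*(j)*s3) =
      A * ((p1 + (-j)*q1 + (j)*r1 + (-j)*(j)*s1) * (p4 + (-j)*q4 + (j)*r4 + (-j)*(j)*s4)) + B * (pn + (-j)*qn + (j)*rn + (-j)*(j)*sn)^2)
    (h5 : (p2 + (2)*q2 + (2)*r2 + (2)*(2)*s2) * (p3 + (2)*q3 + (2)*r3 + (2)*(2)*s3) =
      A * ((p1 + (2)*q1 + (2)*r1 + (2)*(2)*s1) * (p4 + (2)*q4 + (2)*r4 + (2)*(2)*s4)) + B * (pn + (2)*qn + (2)*rn + (2)*(2)*sn)^2)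
    (h6 : (p2 + (-2)*q2 + (-2)*r2 + (-2)*(-2)*s2) * (p3 + (-2)*q3 + (-2)*r3 + (-2)*(-2)*s3) =
      A * ((p1 + (-2)*q1 + (-2)*r1 + (-2)*(-2)*s1) * (p4 + (-2)*q4 + (-2)*r4 + (-2)*(-2)*s4)) + B * (pn + (-2)*qn + (-2)*rn + (-2)*(-2)*sn)^2)
    (h7 : (p2 + (2*j)*q2 + (-(2*j))*r2 + (2*j)*(-(2*j))*s2) * (p3 + (2*j)*q3 + (-(2*j))*r3 + (2*j)*(-(2*j))*s3) =
      A * ((p1 + (2*j)*q1 + (-(2*j))*r1 + (2*j)*(-(2*j))*s1) * (p4 + (2*j)*q4 + (-(2*j))*r4 + (2*j)*(-(2*j))*s4)) + B * (pn + (2*j)*qn + (-(2*j))*rn + (2*j)*(-(2*j))*sn)^2)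
    (h8 : (p2 + (1+j)*q2 + (1-j)*r2 + (1+j)*(1-j)*s2) * (p3 + (1+j)*q3 + (1-j)*r3 + (1+j)*(1-j)*s3) =
      A * ((p1 + (1+j)*q1 + (1-j)*r1 + (1+j)*(1-j)*s1) * (p4 + (1+j)*q4 + (1-j)*r4 + (1+j)*(1-j)*s4)) + B * (pn + (1+j)*qn + (1-j)*rn + (1+j)*(1-j)*sn)^2)
    (h9 : (p2 + (1-j)*q2 + (1+j)*r2 + (1-j)*(1+j)*s2) * (p3 + (1-j)*q3 + (1+j)*r3 + (1-j)*(1+j)*s3) =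
      A * ((p1 + (1-j)*q1 + (1+j)*r1 + (1-j)*(1+j)*s1) * (p4 + (1-j)*q4 + (1+j)*r4 + (1-j)*(1+j)*s4)) + B * (pn + (1-j)*qn + (1+j)*rn + (1-j)*(1+j)*sn)^2) :
    r2 * r3 = A * (r1 * r4) + B * rn^2 := by
  linear_combination (1/8 - j/12) * h1 +
    (1/8 - j/12) * h2 +
    (-1/8 : ℂ) * h3 +
    (-1/8 + j/6) * h4 +
    (j/48) * h5 +
    (j/48) * h6 +
    (-j/24) * h7 +
    (j/8) * h8 +
    (-j/8) * h9 +
    ((3/4)*(r2*r3 - A*(r1*r4) - B*rn^2) - (1/4)*(p2*s3 + s2*p3 + q2*r3 + r2*q3 - A*(p1*s4 + s1*p4 + q1*r4 + r1*q4) - B*(2*pn*sn + 2*qn*rn)) + (j^2/4)*(r2*s3 + s2*r3 - A*(r1*s4 + s1*r4) - 2*B*rn*sn) - (1/4)*(q2*q3 - A*(q1*q4) - B*qn^2) - (j^2/4)*(q2*s3 + s2*q3 - A*(q1*s4 + s1*q4) - 2*B*qn*sn) + (j^3/2 + j^2/4 - j/2 - 1/4)*(s2*s3 - A*(s1*s4)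 - B*sn^2)) * hj

end AuxNoPerfectAnticorrelation

/-- Impossibility of perfect anti-correlation for self-fidelities: if the
self-fidelities of two unitaries `U₁, U₂` on `ℂ^d` satisfy a strictly
decreasing affine relation `X₂(ψ) = a·X₁(ψ) + b` (with `a < 0`) for every unit
vector `ψ`, then at least one of the two self-fidelity functions is constant on
the unit sphere. -/
theorem no_perfect_anticorrelation (d : ℕ)
    (U₁ U₂ : Matrix (Fin d) (Fin d) ℂ)
    (hU₁ : U₁ ∈ Matrix.unitaryGroup (Fin d) ℂ)
    (hU₂ : U₂ ∈ Matrix.unitaryGroup (Fin d) ℂ)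
    (X₁ X₂ : EuclideanSpace ℂ (Fin d) → ℝ)
    (hX₁ : ∀ ψ, X₁ ψ = ‖star ((ψ : Fin d → ℂ)) ⬝ᵥ (U₁ *ᵥ (ψ : Fin d → ℂ))‖ ^ 2)
    (hX₂ : ∀ ψ, X₂ ψ = ‖star ((ψ : Fin d → ℂ)) ⬝ᵥ (U₂ *ᵥ (ψ : Fin d → ℂ))‖ ^ 2)
    (a b : ℝ) (ha : a < 0)
    (haff : ∀ ψ : EuclideanSpace ℂ (Fin d), ‖ψ‖ = 1 → X₂ ψ = a * X₁ ψ + b) :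
    (∃ c : ℝ, ∀ ψ : EuclideanSpace ℂ (Fin d), ‖ψ‖ = 1 → X₁ ψ = c) ∨
    (∃ c : ℝ, ∀ ψ : EuclideanSpace ℂ (Fin d), ‖ψ‖ = 1 → X₂ ψ = c) := by
  by_cases hd : d = 0
  · left
    refine ⟨0, fun ψ hψ => ?_⟩
    exfalso
    subst hd
    rw [EuclideanSpace.norm_eq] at hψ
    simp at hψ
  have hA0 : ((a : ℂ)) ≠ 0 := by
    simp only [ne_eq, Complex.ofReal_eq_zero]
    exact ne_of_lt ha
  -- unitarity equations
  have h11 : U₁ᴴ * U₁ = 1 := by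
    simpa [Matrix.star_eq_conjTranspose] using Matrix.mem_unitaryGroup_iff'.mp hU₁
  have h21 : U₂ᴴ * U₂ = 1 := by
    simpa [Matrix.star_eq_conjTranspose] using Matrix.mem_unitaryGroup_iff'.mp hU₂
  have h12 : U₁ * U₁ᴴ = 1 := by
    simpa [Matrix.star_eq_conjTranspose] using Matrix.mem_unitaryGroup_iff.mp hU₁
  -- unit-sphere complex identity
  have Hunit : ∀ ψE : EuclideanSpace ℂ (Fin d), ‖ψE‖ = 1 →
      (star (ψE : Fin d → ℂ) ⬝ᵥ (U₂ *ᵥ (ψE : Fin d → ℂ))) *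
        (star (ψE : Fin d → ℂ) ⬝ᵥ (U₂ᴴ *ᵥ (ψE : Fin d → ℂ)))
      = (a : ℂ) * ((star (ψE : Fin d → ℂ) ⬝ᵥ (U₁ *ᵥ (ψE : Fin d → ℂ))) *
          (star (ψE : Fin d → ℂ) ⬝ᵥ (U₁ᴴ *ᵥ (ψE : Fin d → ℂ))))
        + (b : ℂ) * (star (ψE : Fin d → ℂ) ⬝ᵥ (ψE : Fin d → ℂ))^2 := by
    intro ψE hψn
    have hψdot : star (ψE : Fin d → ℂ) ⬝ᵥ (ψE : Fin d → ℂ) = 1 := by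
      rw [← inner_eq_dot ψE ψE]
      rw [show (inner ℂ ψE ψE : ℂ) = ((‖ψE‖^2 : ℝ) : ℂ) from by
        exact_mod_cast inner_self_eq_norm_sq_to_K ψE]
      rw [hψn]; norm_num
    have hre := haff ψE hψn
    rw [hX₁ ψE, hX₂ ψE] at hre
    have hcast : ((‖star (ψE : Fin d → ℂ) ⬝ᵥ (U₂ *ᵥ (ψE : Fin d → ℂ))‖^2 : ℝ) : ℂ)
        = (a : ℂ) * ((‖star (ψE : Fin d → ℂ) ⬝ᵥ (U₁ *ᵥ (ψE : Fin d → ℂ))‖^2 : ℝ) : ℂ) + (b : ℂ) := by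
      exact_mod_cast congrArg (Complex.ofReal) hre
    have hsq : ∀ z : ℂ, ((‖z‖^2 : ℝ) : ℂ) = z * (starRingEnd ℂ) z := by
      intro z
      rw [Complex.mul_conj]
      norm_cast
      simp [Complex.normSq_eq_norm_sq]
    rw [hsq, hsq, conj_dotU U₂, conj_dotU U₁] at hcast
    rw [hψdot]
    linear_combination hcast
  -- the global complex-valued identity, by homogeneity
  have Hyp : ∀ χ : Fin d → ℂ,
      (star χ ⬝ᵥ (U₂ *ᵥ χ)) * (star χ ⬝ᵥ (U₂ᴴ *ᵥ χ))
      = (a : ℂ) * ((star χ ⬝ᵥ (U₁ *ᵥ χ)) * (star χ ⬝ᵥ (U₁ᴴ *ᵥ χ)))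
        + (b : ℂ) * (star χ ⬝ᵥ χ)^2 := by
    intro χ
    by_cases hχ : χ = 0
    · subst hχ; simp
    obtain ⟨χE, hχE⟩ : ∃ χE : EuclideanSpace ℂ (Fin d), (χE : Fin d → ℂ) = χ := ⟨WithLp.toLp 2 χ, rfl⟩
    have hχE0 : χE ≠ 0 := by
      intro h0
      apply hχ
      rw [← hχE, h0]
      try rfl
    have hn : ‖χE‖ ≠ 0 := norm_ne_zero_iff.mpr hχE0
    set n : ℝ := ‖χE‖ with hndef
    have hnC : ((n : ℂ)) ≠ 0 := by exact_mod_cast hn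
    obtain ⟨ψf, hψfdef⟩ : ∃ ψf : Fin d → ℂ, ψf = ((n : ℂ))⁻¹ • χ := ⟨_, rfl⟩
    obtain ⟨ψE, hψE⟩ : ∃ ψE : EuclideanSpace ℂ (Fin d), (ψE : Fin d → ℂ) = ψf := ⟨WithLp.toLp 2 ψf, rfl⟩
    have hψEs : ψE = (((n : ℂ))⁻¹ • χE : EuclideanSpace ℂ (Fin d)) := by
      rw [hψfdef, ← hχE] at hψE
      exact WithLp.ofLp_injective 2 hψE
    have hψn : ‖ψE‖ = 1 := by
      rw [hψEs, norm_smul]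
      simp only [norm_inv, Complex.norm_real, Real.norm_eq_abs]
      rw [abs_of_nonneg (norm_nonneg χE), ← hndef]
      field_simp
    have hχψ : χ = (n : ℂ) • ψf := by
      rw [hψfdef, smul_smul, mul_inv_cancel₀ hnC, one_smul]
    have hunit := Hunit ψE hψn
    rw [hψE] at hunit
    rw [hχψ]
    simp only [star_smul, Matrix.mulVec_smul, smul_dotProduct, dotProduct_smul, smul_eq_mul,
      Complex.star_def, Complex.conj_ofReal]
    linear_combination ((n : ℂ))^4 * hunit
  -- eigenvector of U₂
  haveI : Nonempty (Fin d) := ⟨⟨0, Nat.pos_of_ne_zero hd⟩⟩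
  obtain ⟨μ, hμev⟩ := Module.End.exists_eigenvalue (Matrix.mulVecLin U₂)
  obtain ⟨v, hv⟩ := hμev.exists_hasEigenvector
  have hveq : U₂ *ᵥ v = μ • v := by
    simpa [Matrix.mulVecLin_apply] using hv.apply_eq_smul
  have hvne : v ≠ 0 := hv.2
  obtain ⟨vE, hvE⟩ : ∃ vE : EuclideanSpace ℂ (Fin d), (vE : Fin d → ℂ) = v := ⟨WithLp.toLp 2 v, rfl⟩
  have hvE0 : vE ≠ 0 := by
    intro h0; apply hvne; rw [← hvE, h0]
    try rfl
  have hnv : ‖vE‖ ≠ 0 := norm_ne_zero_iff.mpr hvE0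
  have hnvC : ((‖vE‖ : ℂ)) ≠ 0 := by exact_mod_cast hnv
  have hvdot : star v ⬝ᵥ v = ((‖vE‖^2 : ℝ) : ℂ) := by
    rw [← hvE, ← inner_eq_dot vE vE]
    exact_mod_cast inner_self_eq_norm_sq_to_K vE
  obtain ⟨f, hfdef⟩ : ∃ f : Fin d → ℂ, f = ((‖vE‖ : ℂ))⁻¹ • v := ⟨_, rfl⟩
  have hff : star f ⬝ᵥ f = 1 := by
    rw [hfdef]
    simp only [star_smul, smul_dotProduct, dotProduct_smul, smul_eq_mul,
      Complex.star_def, map_inv₀, Complex.conj_ofReal]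
    rw [hvdot]
    push_cast
    field_simp
    try ring
  have hU₂f : U₂ *ᵥ f = μ • f := by
    rw [hfdef, Matrix.mulVec_smul, hveq, smul_comm]
  have hμ1 : μ * (starRingEnd ℂ) μ = 1 := by
    have h := unit_dot U₂ h21 f f
    rw [hU₂f] at h
    simp only [star_smul, smul_dotProduct, dotProduct_smul, smul_eq_mul, Complex.star_def] at h
    rw [hff] at h
    linear_combination h
  have hU₂Hf : U₂ᴴ *ᵥ f = (starRingEnd ℂ) μ • f := by
    have h0 : U₂ᴴ *ᵥ (U₂ *ᵥ f) = f := by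
      rw [Matrix.mulVec_mulVec, h21, Matrix.one_mulVec]
    rw [hU₂f, Matrix.mulVec_smul] at h0
    have h1 := congrArg (fun x => (starRingEnd ℂ) μ • x) h0
    simp only [smul_smul] at h1
    rw [show (starRingEnd ℂ) μ * μ = 1 from by linear_combination hμ1, one_smul] at h1
    exact h1
  -- polarized identity
  obtain ⟨g, hgdef⟩ : ∃ g : Fin d → ℂ, g = U₁ *ᵥ f := ⟨_, rfl⟩
  obtain ⟨hvec, hhdef⟩ : ∃ hvec : Fin d → ℂ, hvec = U₁ᴴ *ᵥ f := ⟨_, rfl⟩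
  have key : ∀ φ : Fin d → ℂ,
      (star φ ⬝ᵥ f)^2
      = (a : ℂ) * ((star φ ⬝ᵥ g) * (star φ ⬝ᵥ hvec)) + (b : ℂ) * (star φ ⬝ᵥ f)^2 := by
    intro φ
    have expand : ∀ z w : ℂ, (starRingEnd ℂ) z = w →
        ((star f ⬝ᵥ (U₂ *ᵥ f)) + z * (star f ⬝ᵥ (U₂ *ᵥ φ)) + w * (star φ ⬝ᵥ (U₂ *ᵥ f)) + z * w * (star φ ⬝ᵥ (U₂ *ᵥ φ))) *
        ((star f ⬝ᵥ (U₂ᴴ *ᵥ f)) + z * (star f ⬝ᵥ (U₂ᴴ *ᵥ φ)) + w * (star φ ⬝ᵥ (U₂ᴴ *ᵥ f)) + z * w * (star φ ⬝ᵥ (U₂ᴴ *ᵥ φ)))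
        = (a : ℂ) * (((star f ⬝ᵥ (U₁ *ᵥ f)) + z * (star f ⬝ᵥ (U₁ *ᵥ φ)) + w * (star φ ⬝ᵥ (U₁ *ᵥ f)) + z * w * (star φ ⬝ᵥ (U₁ *ᵥ φ))) *
            ((star f ⬝ᵥ (U₁ᴴ *ᵥ f)) + z * (star f ⬝ᵥ (U₁ᴴ *ᵥ φ)) + w * (star φ ⬝ᵥ (U₁ᴴ *ᵥ f)) + z * w * (star φ ⬝ᵥ (U₁ᴴ *ᵥ φ))))
          + (b : ℂ) * ((star f ⬝ᵥ f) + z * (star f ⬝ᵥ φ) + w * (star φ ⬝ᵥ f) + z * w * (star φ ⬝ᵥ φ))^2 := by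
      intro z w hw
      have h := Hyp (f + z • φ)
      simp only [star_add, star_smul, Matrix.mulVec_add, Matrix.mulVec_smul, add_dotProduct,
        dotProduct_add, smul_dotProduct, dotProduct_smul, smul_eq_mul, Complex.star_def] at h
      rw [hw] at h
      linear_combination h
    have hpol :
        (star φ ⬝ᵥ (U₂ *ᵥ f)) * (star φ ⬝ᵥ (U₂ᴴ *ᵥ f))
        = (a : ℂ) * ((star φ ⬝ᵥ (U₁ *ᵥ f)) * (star φ ⬝ᵥ (U₁ᴴ *ᵥ f))) + (b : ℂ) * (star φ ⬝ᵥ f)^2 :=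
      polar9 Complex.I ((a : ℂ)) ((b : ℂ)) _ _ _ _ _ _ _ _ _ _ _ _ _ _ _ _ _ _ _ _
        Complex.I_mul_I
        (expand _ _ (by simp [Complex.ext_iff])) (expand _ _ (by simp [Complex.ext_iff]))
        (expand _ _ (by simp [Complex.ext_iff])) (expand _ _ (by simp [Complex.ext_iff]))
        (expand _ _ (by simp [Complex.ext_iff])) (expand _ _ (by simp [Complex.ext_iff]))
        (expand _ _ (by simp [Complex.ext_iff])) (expand _ _ (by simp [Complex.ext_iff]))
        (expand _ _ (by simp [Complex.ext_iff]))
    rw [hU₂f, hU₂Hf] at hpol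
    simp only [dotProduct_smul, smul_eq_mul] at hpol
    rw [← hgdef, ← hhdef] at hpol
    calc (star φ ⬝ᵥ f)^2
        = (μ * (starRingEnd ℂ) μ) * (star φ ⬝ᵥ f)^2 := by rw [hμ1]; ring
      _ = (μ * (star φ ⬝ᵥ f)) * ((starRingEnd ℂ) μ * (star φ ⬝ᵥ f)) := by ring
      _ = (a : ℂ) * ((star φ ⬝ᵥ g) * (star φ ⬝ᵥ hvec)) + (b : ℂ) * (star φ ⬝ᵥ f)^2 := hpol
  -- scalar bookkeeping
  have hgg : star g ⬝ᵥ g = 1 := by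
    rw [hgdef, unit_dot U₁ h11 f f]; exact hff
  have hhh : star hvec ⬝ᵥ hvec = 1 := by
    rw [hhdef, unit_dot U₁ᴴ (by rwa [Matrix.conjTranspose_conjTranspose]) f f]; exact hff
  obtain ⟨α, hαdef⟩ : ∃ α : ℂ, α = star f ⬝ᵥ g := ⟨_, rfl⟩
  obtain ⟨β, hβdef⟩ : ∃ β : ℂ, β = star g ⬝ᵥ hvec := ⟨_, rfl⟩
  have hfh : star f ⬝ᵥ hvec = (starRingEnd ℂ) α := by
    rw [hhdef, hαdef, hgdef, ← conj_dotU U₁ f f]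
  have hgf : star g ⬝ᵥ f = (starRingEnd ℂ) α := by
    rw [hαdef, ← conj_dot' f g]
  have hhf : star hvec ⬝ᵥ f = α := by
    rw [← conj_dot' f hvec, hfh, Complex.conj_conj]
  have hhg : star hvec ⬝ᵥ g = (starRingEnd ℂ) β := by
    rw [hβdef, ← conj_dot' g hvec]
  have e1 := key g
  have e3 := key f
  have e4 := key (g + hvec)
  rw [hgf, hgg, ← hβdef] at e1
  rw [hff, ← hαdef, hfh] at e3
  simp only [star_add, add_dotProduct] at e4
  rw [hgf, hhf, hgg, hhg, ← hβdef, hhh] at e4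
  have h3' : (a : ℂ) * (α * (starRingEnd ℂ) α) = 1 - (b : ℂ) := by
    linear_combination - e3
  have hAβ : (a : ℂ) * β = (a : ℂ) * (α * ((starRingEnd ℂ) α)^3) := by
    linear_combination - e1 - ((starRingEnd ℂ) α)^2 * h3'
  have hβval : β = α * ((starRingEnd ℂ) α)^3 := mul_left_cancel₀ hA0 hAβ
  have hδval : (starRingEnd ℂ) β = (starRingEnd ℂ) α * α^3 := by
    simpa [_root_.map_mul, _root_.map_pow, Complex.conj_conj] using congrArg (starRingEnd ℂ) hβval
  rw [hδval, hβval] at e4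
  have hsqA : (a : ℂ) * ((1 - (α * (starRingEnd ℂ) α)^2)^2) = 0 := by
    linear_combination - e4 - ((starRingEnd ℂ) α + α)^2 * h3'
  have hsq0 : (1 - (α * (starRingEnd ℂ) α)^2)^2 = 0 := by
    rcases mul_eq_zero.mp hsqA with h | h
    · exact absurd h hA0
    · exact h
  have hu1 : (α * (starRingEnd ℂ) α)^2 = 1 := by
    have h := pow_eq_zero_iff (n := 2) (by norm_num) |>.mp hsq0
    linear_combination - h
  have hns : (Complex.normSq α)^2 = (1 : ℝ) := by
    have h := hu1
    rw [Complex.mul_conj] at h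
    exact_mod_cast h
  have hns1 : (Complex.normSq α : ℝ) = 1 := by
    nlinarith [Complex.normSq_nonneg α]
  have hab : a + b = 1 := by
    have h := h3'
    rw [Complex.mul_conj, hns1] at h
    simp only [Complex.ofReal_one, mul_one] at h
    have h2 : (a : ℂ) + (b : ℂ) = 1 := by linear_combination h
    exact_mod_cast h2
  -- conclusion : X₁ is constant ≡ 1
  left
  refine ⟨1, fun ψ hψ => ?_⟩
  have hψdot : star (ψ : Fin d → ℂ) ⬝ᵥ (ψ : Fin d → ℂ) = 1 := by
    rw [← inner_eq_dot ψ ψ]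
    rw [show (inner ℂ ψ ψ : ℂ) = ((‖ψ‖^2 : ℝ) : ℂ) from by
      exact_mod_cast inner_self_eq_norm_sq_to_K ψ]
    rw [hψ]; norm_num
  have cs : ∀ (U : Matrix (Fin d) (Fin d) ℂ), Uᴴ * U = 1 →
      ‖star (ψ : Fin d → ℂ) ⬝ᵥ (U *ᵥ (ψ : Fin d → ℂ))‖ ≤ 1 := by
    intro U hU
    obtain ⟨wv, hwv⟩ : ∃ wv : EuclideanSpace ℂ (Fin d),
        (wv : Fin d → ℂ) = U *ᵥ (ψ : Fin d → ℂ) := ⟨WithLp.toLp 2 _, rfl⟩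
    have hinner : (inner ℂ ψ wv : ℂ) = star (ψ : Fin d → ℂ) ⬝ᵥ (U *ᵥ (ψ : Fin d → ℂ)) := by
      rw [inner_eq_dot ψ wv, hwv]
    have hwnorm : ‖wv‖ = 1 := by
      have h1 : (inner ℂ wv wv : ℂ) = ((‖wv‖^2 : ℝ) : ℂ) := by
        exact_mod_cast inner_self_eq_norm_sq_to_K wv
      have h2 : (inner ℂ wv wv : ℂ) = 1 := by
        rw [inner_eq_dot wv wv, hwv, unit_dot U hU]
        exact hψdot
      rw [h2] at h1
      have h3 : (‖wv‖^2 : ℝ) = 1 := by exact_mod_cast h1.symm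
      nlinarith [norm_nonneg wv]
    calc ‖star (ψ : Fin d → ℂ) ⬝ᵥ (U *ᵥ (ψ : Fin d → ℂ))‖
        = ‖(inner ℂ ψ wv : ℂ)‖ := by rw [hinner]
      _ ≤ ‖ψ‖ * ‖wv‖ := norm_inner_le_norm ψ wv
      _ = 1 := by rw [hψ, hwnorm]; ring
  have hX1le : X₁ ψ ≤ 1 := by
    rw [hX₁ ψ]
    have h := cs U₁ h11
    nlinarith [norm_nonneg (star (ψ : Fin d → ℂ) ⬝ᵥ (U₁ *ᵥ (ψ : Fin d → ℂ)))]
  have hX2le : X₂ ψ ≤ 1 := by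
    rw [hX₂ ψ]
    have h := cs U₂ h21
    nlinarith [norm_nonneg (star (ψ : Fin d → ℂ) ⬝ᵥ (U₂ *ᵥ (ψ : Fin d → ℂ)))]
  have hrel := haff ψ hψ
  by_contra hne
  have hlt : X₁ ψ < 1 := lt_of_le_of_ne hX1le hne
  have hpos : a * (X₁ ψ - 1) > 0 := mul_pos_of_neg_of_neg ha (by linarith)
  nlinarith
end
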